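/- Let p and q be odd integers with p, q ≥ 5, and let G(p,q) be the presented group on generators A,B,C with relators A^p, B^q, (AB)^2, (BC)^2, (CA)^2, and C^{-1}(A^2B^2)^2. Then C^5 = 1 holds in G(p,q). -/

import Mathlib

/-!
Put `d = ab`, an involution. Then `a²b² = (a d a⁻¹) d` is a product of two involutions, so
conjugation by `d` inverts it and hence inverts its square `c`, i.e. `(abc)² = 1`. Using
`(ab)² = (bc)² = (ca)² = 1` to reorder, `(abc)² = 1` becomes `a²b² = c⁻²`, whence
`c = (a²b²)² = c⁻⁴`.
-/

/-- The relators of the group `G(p,q)` on generators `A = of 0`, `B = of 1`, `C = of 2`,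
with relators `A^p, B^q, (AB)^2, (BC)^2, (CA)^2, C⁻¹(A²B²)²`. -/
def GRels (p q : ℤ) : Set (FreeGroup (Fin 3)) :=
  let A : FreeGroup (Fin 3) := FreeGroup.of 0
  let B : FreeGroup (Fin 3) := FreeGroup.of 1
  let C : FreeGroup (Fin 3) := FreeGroup.of 2
  { A ^ p, B ^ q, (A * B) ^ 2, (B * C) ^ 2, (C * A) ^ 2, C⁻¹ * (A ^ 2 * B ^ 2) ^ 2 }

variable {G : Type*} [Group G]

theorem inv_eq_self_of_sq_eq_one {s : G} (hs : s ^ 2 = 1) : s⁻¹ = s :=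
  inv_eq_of_mul_eq_one_right (by rwa [← sq])

theorem mul_eq_inv_mul_inv_of_sq_eq_one {x y : G} (h : (x * y) ^ 2 = 1) :
    x * y = y⁻¹ * x⁻¹ := by
  rw [← mul_inv_rev, inv_eq_self_of_sq_eq_one h]

theorem mul_mul_pow_mul_eq_inv {s t : G} (hs : s ^ 2 = 1) (ht : t ^ 2 = 1) (n : ℕ) :
    t * (s * t) ^ n * t = ((s * t) ^ n)⁻¹ := by
  have ht' := inv_eq_self_of_sq_eq_one ht
  calc t * (s * t) ^ n * t = (t * (s * t) * t⁻¹) ^ n := by rw [conj_pow, ht']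
    _ = (t * s) ^ n := by group
    _ = ((s * t)⁻¹) ^ n := by rw [mul_inv_rev, ht', inv_eq_self_of_sq_eq_one hs]
    _ = ((s * t) ^ n)⁻¹ := inv_pow _ _

theorem mul_mul_sq_eq_one_of_eq_sq_mul_sq_sq {a b c : G} (hab : (a * b) ^ 2 = 1)
    (hc : c = (a ^ 2 * b ^ 2) ^ 2) : (a * b * c) ^ 2 = 1 := by
  have hs : (a * (a * b) * a⁻¹) ^ 2 = 1 := by rw [conj_pow, hab]; group
  have he : a ^ 2 * b ^ 2 = a * (a * b) * a⁻¹ * (a * b) := by simp only [sq]; group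
  have hdcd : a * b * c * (a * b) = c⁻¹ := by rw [hc, he, mul_mul_pow_mul_eq_inv hs hab]
  calc (a * b * c) ^ 2 = a * b * c * (a * b) * c := by rw [sq]; group
    _ = 1 := by rw [hdcd, inv_mul_cancel]

theorem sq_mul_sq_eq_inv_sq {a b c : G} (hab : (a * b) ^ 2 = 1) (hbc : (b * c) ^ 2 = 1)
    (hca : (c * a) ^ 2 = 1) (habc : (a * b * c) ^ 2 = 1) : a ^ 2 * b ^ 2 = (c ^ 2)⁻¹ := by
  have h : a * b * a⁻¹ * c⁻¹ * c⁻¹ * b⁻¹ = 1 := by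
    calc a * b * a⁻¹ * c⁻¹ * c⁻¹ * b⁻¹ = a * b * (c * a) * (b * c) := by
          rw [mul_eq_inv_mul_inv_of_sq_eq_one hca, mul_eq_inv_mul_inv_of_sq_eq_one hbc]; group
      _ = 1 := by rw [← habc, sq]; group
  calc a ^ 2 * b ^ 2 = a * (a * b) * b := by simp only [sq]; group
    _ = a * (b⁻¹ * a⁻¹) * b := by rw [mul_eq_inv_mul_inv_of_sq_eq_one hab]
    _ = (a * b * a⁻¹)⁻¹ * (a * b * a⁻¹ * c⁻¹ * c⁻¹ * b⁻¹) * b := by rw [h]; group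
    _ = (c ^ 2)⁻¹ := by group

theorem pow_five_eq_one_of_relations {a b c : G} (hab : (a * b) ^ 2 = 1)
    (hbc : (b * c) ^ 2 = 1) (hca : (c * a) ^ 2 = 1) (hc : c = (a ^ 2 * b ^ 2) ^ 2) :
    c ^ 5 = 1 := by
  have habc := mul_mul_sq_eq_one_of_eq_sq_mul_sq_sq hab hc
  calc c ^ 5 = (a ^ 2 * b ^ 2) ^ 2 * c ^ 4 := by rw [← hc]; group
    _ = ((c ^ 2)⁻¹) ^ 2 * c ^ 4 := by rw [sq_mul_sq_eq_inv_sq hab hbc hca habc]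
    _ = 1 := by group

theorem C_pow_five_eq_one_general (p q : ℤ) :
    (PresentedGroup.of 2 : PresentedGroup (GRels p q)) ^ 5 = 1 := by
  have rel {x : FreeGroup (Fin 3)} (hx : x ∈ GRels p q) : PresentedGroup.mk _ x = 1 :=
    PresentedGroup.one_of_mem hx
  refine pow_five_eq_one_of_relations (a := .of 0) (b := .of 1)
    (rel (by simp [GRels])) (rel (by simp [GRels])) (rel (by simp [GRels])) ?_
  exact inv_mul_eq_one.mp <| rel (x := (.of 2)⁻¹ * (.of 0 ^ 2 * .of 1 ^ 2) ^ 2)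
    (by simp [GRels])

/-- In the group `G(p,q) = ⟨A,B,C ∣ Aᵖ, B^q, (AB)², (BC)², (CA)², C = (A²B²)²⟩`
with `p,q` odd and `p,q ≥ 5`, the relation `C⁵ = 1` holds. -/
theorem C_pow_five_eq_one (p q : ℤ) (hp : Odd p) (hq : Odd q)
    (hp5 : 5 ≤ p) (hq5 : 5 ≤ q) :
    (PresentedGroup.of 2 : PresentedGroup (GRels p q)) ^ 5 = 1 :=
  C_pow_five_eq_one_general p q
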